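/- arXiv:1605.00132 — 2 statements merged into one kernel-verified Lean document; each statement's English description precedes it below -/
import Mathlib

section
/- Let k ≥ 0. The sequence (𝒬_k ⊕ span{x^{k+1}, y^{k+1}}) →∇→ (𝐐_k ⊕ span{(x^k y^{k+1}, −x^{k+1} y^k)}) →∇×→ 𝒬_k on ℝ² is exact: (i) the kernel of ∇ on 𝒬_k ⊕ span{x^{k+1}, y^{k+1}} consists exactly of the constants; (ii) ∇(𝒬_k ⊕ span{x^{k+1}, y^{k+1}}) = {v ∈ 𝐐_k ⊕ span{(x^k y^{k+1}, −x^{k+1} y^k)} : ∇×v = 0}; (iii) ∇× maps 𝐐_k ⊕ span{(x^k y^{k+1}, −x^{k+1} y^k)} onto 𝒬_k. -/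
open MvPolynomial

/-- Polynomials on `ℝ²`. -/
abbrev R2 := MvPolynomial (Fin 2) ℝ

/-- The gradient `∇p = (∂ₓ p, ∂_y p)`. -/
noncomputable def grad2 (p : R2) : R2 × R2 := (pderiv 0 p, pderiv 1 p)

/-- The scalar curl `∇×(v₁,v₂) = -∂_y v₁ + ∂ₓ v₂`. -/
noncomputable def curl2 (v : R2 × R2) : R2 := - pderiv 1 v.1 + pderiv 0 v.2

/-- Membership in `𝒬_m`: degree at most `m` in each variable separately. -/
def memQ2 (m : ℕ) (p : R2) : Prop := p.degreeOf 0 ≤ m ∧ p.degreeOf 1 ≤ m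

/-- Membership in `𝒬_k ⊕ span{x^{k+1}, y^{k+1}}`. -/
noncomputable def memH3 (k : ℕ) (p : R2) : Prop :=
  ∃ q : R2, ∃ a b : ℝ, memQ2 k q ∧
    p = q + a • X 0 ^ (k + 1) + b • X 1 ^ (k + 1)

/-- Membership in `𝐐_k ⊕ span{(x^k y^{k+1}, −x^{k+1} y^k)}`. -/
noncomputable def memE3 (k : ℕ) (v : R2 × R2) : Prop :=
  ∃ w₁ w₂ : R2, ∃ c : ℝ, memQ2 k w₁ ∧ memQ2 k w₂ ∧
    v = (w₁ + c • (X 0 ^ k * X 1 ^ (k + 1)), w₂ - c • (X 0 ^ (k + 1) * X 1 ^ k))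

lemma fs_sub_single (s e : Fin 2 →₀ ℕ) (i : Fin 2) (h : s i ≠ 0) (he : s - Finsupp.single i 1 = e) :
    s = e + Finsupp.single i 1 := by
  ext j
  have h2 : ((s - Finsupp.single i 1 : Fin 2 →₀ ℕ)) j = e j := by rw [he]
  rw [Finsupp.tsub_apply] at h2
  rw [Finsupp.add_apply]
  rcases eq_or_ne j i with rfl | hj
  · simp only [Finsupp.single_eq_same] at h2 ⊢; omega
  · simp only [Finsupp.single_eq_of_ne' (Ne.symm hj)] at h2 ⊢; omega

lemma add_sub_single (e : Fin 2 →₀ ℕ) (i : Fin 2) :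
    e + Finsupp.single i 1 - Finsupp.single i 1 = e := by
  ext j; rw [Finsupp.tsub_apply, Finsupp.add_apply]; omega

lemma add_single_apply (e : Fin 2 →₀ ℕ) (i : Fin 2) :
    ((e + Finsupp.single i 1 : Fin 2 →₀ ℕ)) i = e i + 1 := by
  rw [Finsupp.add_apply, Finsupp.single_eq_same]

lemma coeff_pderiv (i : Fin 2) (p : R2) (e : Fin 2 →₀ ℕ) :
    coeff e (pderiv i p) = (e i + 1 : ℝ) * coeff (e + Finsupp.single i 1) p := by
  induction p using MvPolynomial.induction_on' with
  | add p q hp hq => simp [hp, hq, mul_add]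
  | monomial s a =>
    rw [pderiv_monomial, coeff_monomial, coeff_monomial]
    rcases eq_or_ne s (e + Finsupp.single i 1) with rfl | hs
    · rw [if_pos (add_sub_single e i), if_pos rfl, add_single_apply]; push_cast; ring
    · rw [if_neg hs, mul_zero]
      rcases eq_or_ne (s i) 0 with h0 | h0
      · split_ifs with h
        · simp [h0]
        · rfl
      · rw [if_neg fun he => hs (fs_sub_single s e i h0 he)]

/-- Keep only the monomials whose exponent satisfies `P`. -/
noncomputable def sift (P : (Fin 2 →₀ ℕ) → Prop) [DecidablePred P] (p : R2) : R2 :=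
  ∑ d ∈ p.support, monomial d (if P d then coeff d p else 0)

lemma coeff_sift (P : (Fin 2 →₀ ℕ) → Prop) [DecidablePred P] (p : R2) (e : Fin 2 →₀ ℕ) :
    coeff e (sift P p) = if P e then coeff e p else 0 := by
  rw [sift, coeff_sum]
  rw [Finset.sum_eq_single e (fun d _ hd => by rw [coeff_monomial, if_neg hd])
    (fun he => by simp [notMem_support_iff.mp he])]
  rw [coeff_monomial, if_pos rfl]

/-- Formal antiderivative in variable `i`. -/
noncomputable def pint (i : Fin 2) (p : R2) : R2 :=
  ∑ d ∈ p.support, monomial (d + Finsupp.single i 1) (coeff d p / (d i + 1))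

lemma coeff_pint (i : Fin 2) (p : R2) (e : Fin 2 →₀ ℕ) :
    coeff e (pint i p) =
      if e i = 0 then 0 else coeff (e - Finsupp.single i 1) p / (e i) := by
  rw [pint, coeff_sum]
  rcases eq_or_ne (e i) 0 with h0 | h0
  · rw [if_pos h0, Finset.sum_eq_zero]
    intro d _
    rw [coeff_monomial, if_neg]
    intro hd
    have : ((d + Finsupp.single i 1 : Fin 2 →₀ ℕ)) i = e i := by rw [hd]
    rw [add_single_apply] at this; omega
  · rw [if_neg h0]
    have hkey : ∀ d : Fin 2 →₀ ℕ, d + Finsupp.single i 1 = e ↔ d = e - Finsupp.single i 1 := by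
      intro d
      constructor
      · rintro rfl; rw [add_sub_single]
      · rintro rfl
        symm
        exact fs_sub_single e _ i h0 rfl
    rw [Finset.sum_eq_single (e - Finsupp.single i 1)
      (fun d _ hd => by rw [coeff_monomial, if_neg (fun h => hd ((hkey d).mp h))])
      (fun he => ?_)]
    · rw [coeff_monomial, if_pos ((hkey _).mpr rfl)]
      have : ((e - Finsupp.single i 1 : Fin 2 →₀ ℕ)) i = e i - 1 := by
        rw [Finsupp.tsub_apply, Finsupp.single_eq_same]
      rw [this]
      congr 1
      push_cast [Nat.cast_sub (Nat.one_le_iff_ne_zero.mpr h0)]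
      ring
    · rw [coeff_monomial, if_pos ((hkey _).mpr rfl)]
      simp [notMem_support_iff.mp he]

lemma memQ2_iff (m : ℕ) (p : R2) :
    memQ2 m p ↔ ∀ e : Fin 2 →₀ ℕ, coeff e p ≠ 0 → e 0 ≤ m ∧ e 1 ≤ m := by
  constructor
  · rintro ⟨h0, h1⟩ e he
    exact ⟨degreeOf_le_iff.mp h0 e (mem_support_iff.mpr he),
      degreeOf_le_iff.mp h1 e (mem_support_iff.mpr he)⟩
  · intro h
    exact ⟨degreeOf_le_iff.mpr fun d hd => (h d (mem_support_iff.mp hd)).1,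
      degreeOf_le_iff.mpr fun d hd => (h d (mem_support_iff.mp hd)).2⟩

lemma pderiv_pint_self (i : Fin 2) (p : R2) : pderiv i (pint i p) = p := by
  ext e
  rw [coeff_pderiv, coeff_pint, if_neg (by rw [add_single_apply]; omega),
    add_sub_single, add_single_apply]
  have h : ((e i : ℝ) + 1) ≠ 0 := by positivity
  push_cast
  field_simp

lemma fin2_eta (e : Fin 2 →₀ ℕ) :
    e = Finsupp.single 0 (e 0) + Finsupp.single 1 (e 1) := by
  ext j
  rw [Finsupp.add_apply]
  fin_cases j <;> simp

lemma pair_eq_iff (a b : ℕ) (e : Fin 2 →₀ ℕ) :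
    Finsupp.single 0 a + Finsupp.single (1 : Fin 2) b = e ↔ e 0 = a ∧ e 1 = b := by
  constructor
  · rintro rfl
    constructor <;> rw [Finsupp.add_apply] <;> simp
  · rintro ⟨h0, h1⟩
    rw [← h0, ← h1]
    exact (fin2_eta e).symm

lemma coeff_XX (a b : ℕ) (e : Fin 2 →₀ ℕ) :
    coeff e (X 0 ^ a * X 1 ^ b : R2) = if e 0 = a ∧ e 1 = b then 1 else 0 := by
  rw [X_pow_eq_monomial, X_pow_eq_monomial, monomial_mul, coeff_monomial, one_mul]
  simp only [pair_eq_iff]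

lemma coeff_Xpow0 (a : ℕ) (e : Fin 2 →₀ ℕ) :
    coeff e (X 0 ^ a : R2) = if e 0 = a ∧ e 1 = 0 then 1 else 0 := by
  rw [show (X 0 ^ a : R2) = X 0 ^ a * X 1 ^ 0 by ring, coeff_XX]

lemma coeff_Xpow1 (b : ℕ) (e : Fin 2 →₀ ℕ) :
    coeff e (X 1 ^ b : R2) = if e 0 = 0 ∧ e 1 = b then 1 else 0 := by
  rw [show (X 1 ^ b : R2) = X 0 ^ 0 * X 1 ^ b by ring, coeff_XX]

/-- The exponent `x^i y^j`. -/
noncomputable def E (i j : ℕ) : Fin 2 →₀ ℕ := Finsupp.single 0 i + Finsupp.single 1 j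

lemma E_apply0 (i j : ℕ) : E i j 0 = i := by
  rw [E, Finsupp.add_apply]; simp
lemma E_apply1 (i j : ℕ) : E i j 1 = j := by
  rw [E, Finsupp.add_apply]
  rw [Finsupp.single_eq_of_ne (by decide), Finsupp.single_eq_same]; omega

lemma E_eta (e : Fin 2 →₀ ℕ) : e = E (e 0) (e 1) := fin2_eta e

lemma E_eq_iff (i j i' j' : ℕ) : E i j = E i' j' ↔ i = i' ∧ j = j' := by
  constructor
  · intro h
    constructor
    · rw [← E_apply0 i j, h, E_apply0]
    · rw [← E_apply1 i j, h, E_apply1]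
  · rintro ⟨rfl, rfl⟩; rfl

lemma E_add_s0 (i j : ℕ) : E i j + Finsupp.single 0 1 = E (i + 1) j := by
  rw [E, E, add_right_comm, ← Finsupp.single_add]
lemma E_add_s1 (i j : ℕ) : E i j + Finsupp.single 1 1 = E i (j + 1) := by
  rw [E, E, add_assoc, ← Finsupp.single_add]
lemma E_sub_s0 (i j : ℕ) : E (i + 1) j - Finsupp.single 0 1 = E i j := by
  rw [← E_add_s0, add_sub_single]
lemma E_sub_s1 (i j : ℕ) : E i (j + 1) - Finsupp.single 1 1 = E i j := by
  rw [← E_add_s1, add_sub_single]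

lemma cpd0 (p : R2) (i j : ℕ) :
    coeff (E i j) (pderiv 0 p) = (i + 1 : ℝ) * coeff (E (i + 1) j) p := by
  rw [coeff_pderiv, E_apply0, E_add_s0]
lemma cpd1 (p : R2) (i j : ℕ) :
    coeff (E i j) (pderiv 1 p) = (j + 1 : ℝ) * coeff (E i (j + 1)) p := by
  rw [coeff_pderiv, E_apply1, E_add_s1]
lemma cpi0 (p : R2) (i j : ℕ) :
    coeff (E i j) (pint 0 p) = if i = 0 then 0 else coeff (E (i - 1) j) p / i := by
  rw [coeff_pint, E_apply0]
  rcases Nat.eq_zero_or_pos i with rfl | hi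
  · simp
  · rw [if_neg (by omega), if_neg (by omega)]
    obtain ⟨i', rfl⟩ : ∃ i', i = i' + 1 := ⟨i - 1, by omega⟩
    rw [E_sub_s0]
    simp
lemma cpi1 (p : R2) (i j : ℕ) :
    coeff (E i j) (pint 1 p) = if j = 0 then 0 else coeff (E i (j - 1)) p / j := by
  rw [coeff_pint, E_apply1]
  rcases Nat.eq_zero_or_pos j with rfl | hj
  · simp
  · rw [if_neg (by omega), if_neg (by omega)]
    obtain ⟨j', rfl⟩ : ∃ j', j = j' + 1 := ⟨j - 1, by omega⟩
    rw [E_sub_s1]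
    simp
lemma cXX (a b i j : ℕ) :
    coeff (E i j) (X 0 ^ a * X 1 ^ b : R2) = if i = a ∧ j = b then 1 else 0 := by
  rw [coeff_XX, E_apply0, E_apply1]

lemma ext_E {p q : R2} (h : ∀ i j : ℕ, coeff (E i j) p = coeff (E i j) q) : p = q := by
  ext e
  rw [E_eta e]
  exact h _ _

lemma memQ2_iff' (m : ℕ) (p : R2) :
    memQ2 m p ↔ ∀ i j : ℕ, coeff (E i j) p ≠ 0 → i ≤ m ∧ j ≤ m := by
  rw [memQ2_iff]
  constructor
  · intro h i j hij
    have := h (E i j) hij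
    rwa [E_apply0, E_apply1] at this
  · intro h e he
    have := h (e 0) (e 1) (by rwa [← E_eta])
    exact this

lemma part1 (p : R2) (h : grad2 p = 0) : ∃ c : ℝ, p = C c := by
  have h0 : pderiv 0 p = 0 := congrArg Prod.fst h
  have h1 : pderiv 1 p = 0 := congrArg Prod.snd h
  refine ⟨coeff 0 p, ext_E fun i j => ?_⟩
  have hC : coeff (E i j) (C (coeff 0 p) : R2) = if i = 0 ∧ j = 0 then coeff 0 p else 0 := by
    rw [show (C (coeff 0 p) : R2) = coeff 0 p • (X 0 ^ 0 * X 1 ^ 0) by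
      simp [MvPolynomial.smul_eq_C_mul], coeff_smul, cXX]
    simp only [smul_eq_mul, mul_ite, mul_one, mul_zero]
  rw [hC]
  rcases Nat.eq_zero_or_pos i with rfl | hi
  · rcases Nat.eq_zero_or_pos j with rfl | hj
    · rw [if_pos ⟨rfl, rfl⟩]
      congr 1
      rw [E, Finsupp.single_zero, Finsupp.single_zero, add_zero]
    · rw [if_neg (by omega)]
      obtain ⟨j', rfl⟩ : ∃ j', j = j' + 1 := ⟨j - 1, by omega⟩
      have := cpd1 p 0 j'
      rw [h1, coeff_zero] at this
      have hj1 : ((j' : ℝ) + 1) ≠ 0 := by positivity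
      field_simp at this
      exact (mul_eq_zero.mp this.symm).resolve_left hj1
  · rw [if_neg (by omega)]
    obtain ⟨i', rfl⟩ : ∃ i', i = i' + 1 := ⟨i - 1, by omega⟩
    have := cpd0 p i' j
    rw [h0, coeff_zero] at this
    have hi1 : ((i' : ℝ) + 1) ≠ 0 := by positivity
    field_simp at this
    exact (mul_eq_zero.mp this.symm).resolve_left hi1

lemma grad_memQ2 (k : ℕ) (p : R2) (h : memH3 k p) :
    memQ2 k (pderiv 0 p) ∧ memQ2 k (pderiv 1 p) := by
  obtain ⟨q, a, b, hq, rfl⟩ := h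
  have hq' := (memQ2_iff' k q).mp hq
  constructor
  · rw [memQ2_iff']
    intro i j hij
    by_contra hbox
    apply hij
    rw [cpd0]
    rw [show (q + a • X 0 ^ (k+1) + b • X 1 ^ (k+1) : R2)
        = q + a • (X 0 ^ (k+1) * X 1 ^ 0) + b • (X 0 ^ 0 * X 1 ^ (k+1)) by ring_nf]
    rw [coeff_add, coeff_add, coeff_smul, coeff_smul, cXX, cXX]
    have h1 : coeff (E (i+1) j) q = 0 := by
      by_contra hc
      have := hq' _ _ hc
      omega
    rw [h1, if_neg (by omega), if_neg (by omega)]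
    simp
  · rw [memQ2_iff']
    intro i j hij
    by_contra hbox
    apply hij
    rw [cpd1]
    rw [show (q + a • X 0 ^ (k+1) + b • X 1 ^ (k+1) : R2)
        = q + a • (X 0 ^ (k+1) * X 1 ^ 0) + b • (X 0 ^ 0 * X 1 ^ (k+1)) by ring_nf]
    rw [coeff_add, coeff_add, coeff_smul, coeff_smul, cXX, cXX]
    have h1 : coeff (E i (j+1)) q = 0 := by
      by_contra hc
      have := hq' _ _ hc
      omega
    rw [h1, if_neg (by omega), if_neg (by omega)]
    simp

lemma curl_grad (p : R2) : curl2 (grad2 p) = 0 := by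
  rw [curl2, grad2]
  have : pderiv 1 (pderiv 0 p) = pderiv 0 (pderiv 1 p) := by
    apply ext_E
    intro i j
    rw [cpd1, cpd0, cpd0, cpd1]
    ring
  rw [this]
  ring


lemma part3 (k : ℕ) (w : R2) (hw : memQ2 k w) :
    ∃ v : R2 × R2, memE3 k v ∧ curl2 v = w := by
  have hw' := (memQ2_iff' k w).mp hw
  have h0 : ∀ i j : ℕ, k < i ∨ k < j → coeff (E i j) w = 0 := by
    intro i j hij
    by_contra hcon; have := hw' _ _ hcon; omega
  set A := sift (fun d => d 0 < k) w with hA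
  set B := sift (fun d => d 0 = k ∧ d 1 < k) w with hB
  set a := coeff (E k k) w with ha
  set c : ℝ := -a / (2 * (k + 1)) with hc
  refine ⟨(-pint 1 B + c • (X 0 ^ k * X 1 ^ (k+1)),
           pint 0 A - c • (X 0 ^ (k+1) * X 1 ^ k)),
    ⟨-pint 1 B, pint 0 A, c, ?_, ?_, rfl⟩, ?_⟩
  · rw [memQ2_iff']
    intro i j hij
    rw [coeff_neg, neg_ne_zero, cpi1] at hij
    rcases Nat.eq_zero_or_pos j with rfl | hj
    · simp at hij
    · rw [if_neg (by omega)] at hij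
      have h2 : coeff (E i (j-1)) B ≠ 0 := fun h => hij (by rw [h, zero_div])
      rw [hB, coeff_sift, E_apply0, E_apply1] at h2
      by_cases hcond : i = k ∧ j - 1 < k
      · omega
      · rw [if_neg hcond] at h2; exact absurd rfl h2
  · rw [memQ2_iff']
    intro i j hij
    rw [cpi0] at hij
    rcases Nat.eq_zero_or_pos i with rfl | hi
    · simp at hij
    · rw [if_neg (by omega)] at hij
      have h2 : coeff (E (i-1) j) A ≠ 0 := fun h => hij (by rw [h, zero_div])
      simp only [hA, coeff_sift, E_apply0] at h2
      by_cases hcond : i - 1 < k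
      · have h3 : coeff (E (i-1) j) w ≠ 0 := by rwa [if_pos hcond] at h2
        have := hw' _ _ h3
        omega
      · rw [if_neg hcond] at h2; exact absurd rfl h2
  · rw [curl2]
    apply ext_E
    intro i j
    simp only [coeff_add, coeff_sub, coeff_neg, coeff_smul, cpd0, cpd1, cpi0, cpi1, cXX,
      smul_eq_mul, Nat.add_sub_cancel, Nat.succ_ne_zero, if_false]
    simp only [hB, hA, coeff_sift, E_apply0, E_apply1]
    have hj1 : ((j : ℝ) + 1) ≠ 0 := by positivity
    have hi1 : ((i : ℝ) + 1) ≠ 0 := by positivity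
    have hk1 : ((k : ℝ) + 1) ≠ 0 := by positivity
    push_cast
    split_ifs with h1 h2 h3 h4 h5 h6 h7 h8 <;>
      first
        | omega
        | (field_simp; done)
        | (field_simp; ring1)
        | (rw [h0 i j (by omega)]; field_simp; done)
        | (rw [h0 i j (by omega)]; ring)
        | (obtain ⟨rfl, rfl⟩ : i = k ∧ j = k := by omega
           rw [hc, ha]; field_simp; ring)
        | (obtain ⟨rfl, rfl⟩ : i = k ∧ j = k := by omega
           rw [hc, ha]; field_simp)

lemma part2r (k : ℕ) (v : R2 × R2) (hv : memE3 k v) (hcurl : curl2 v = 0) :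
    ∃ p : R2, memH3 k p ∧ v = grad2 p := by
  obtain ⟨w₁, w₂, c, hw1, hw2, rfl⟩ := hv
  have hw1' := (memQ2_iff' k w₁).mp hw1
  have hw2' := (memQ2_iff' k w₂).mp hw2
  have hz1 : ∀ i j : ℕ, k < i ∨ k < j → coeff (E i j) w₁ = 0 := fun i j h => by
    by_contra hcon; have := hw1' _ _ hcon; omega
  have hz2 : ∀ i j : ℕ, k < i ∨ k < j → coeff (E i j) w₂ = 0 := fun i j h => by
    by_contra hcon; have := hw2' _ _ hcon; omega
  -- the curl-free coefficient relation (with the c-part still present)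
  have rel0 : ∀ i j : ℕ,
      ((i : ℝ) + 1) * coeff (E (i+1) j) (w₂ - c • (X 0 ^ (k+1) * X 1 ^ k))
        = ((j : ℝ) + 1) * coeff (E i (j+1)) (w₁ + c • (X 0 ^ k * X 1 ^ (k+1))) := by
    intro i j
    have := congrArg (coeff (E i j)) hcurl
    rw [curl2, coeff_add, coeff_neg, cpd0, cpd1, coeff_zero] at this
    linarith [this]
  -- first: c = 0
  have hc : c = 0 := by
    have h := rel0 k k
    rw [coeff_sub, coeff_add, coeff_smul, coeff_smul, cXX, cXX,
      if_pos ⟨rfl, rfl⟩, if_pos ⟨rfl, rfl⟩, hz2 (k+1) k (by omega),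
      hz1 k (k+1) (by omega)] at h
    have hk1 : ((k : ℝ) + 1) ≠ 0 := by positivity
    simp only [smul_eq_mul, mul_one] at h
    have : (2 * ((k:ℝ)+1)) * c = 0 := by linarith
    rcases mul_eq_zero.mp this with h' | h'
    · exact absurd h' (by positivity)
    · exact h'
  subst hc
  simp only [zero_smul, add_zero, sub_zero] at rel0 ⊢
  -- clean curl relation
  have rel : ∀ i j : ℕ,
      ((i : ℝ) + 1) * coeff (E (i+1) j) w₂ = ((j : ℝ) + 1) * coeff (E i (j+1)) w₁ := rel0
  -- antiderivative
  set S := sift (fun d => d 0 = 0) w₂ with hS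
  set p := pint 0 w₁ + pint 1 S with hp
  have hcS : ∀ i j : ℕ, coeff (E i j) S = if i = 0 then coeff (E i j) w₂ else 0 := by
    intro i j
    rw [hS, coeff_sift, E_apply0]
  have hgrad0 : pderiv 0 p = w₁ := by
    apply ext_E; intro i j
    rw [hp, map_add, coeff_add, pderiv_pint_self, cpd0, cpi1]
    rcases Nat.eq_zero_or_pos j with rfl | hj
    · simp
    · rw [if_neg (by omega), hcS, if_neg (by omega), zero_div, mul_zero, add_zero]
  have hgrad1 : pderiv 1 p = w₂ := by
    apply ext_E; intro i j
    rw [hp, map_add, coeff_add, pderiv_pint_self, cpd1, cpi0, hcS]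
    rcases Nat.eq_zero_or_pos i with rfl | hi
    · rw [if_pos rfl, if_pos rfl, mul_zero, zero_add]
    · rw [if_neg (by omega), if_neg (by omega), add_zero]
      obtain ⟨i', rfl⟩ : ∃ i', i = i' + 1 := ⟨i - 1, by omega⟩
      have h := rel i' j
      have hi1 : ((i' : ℝ) + 1) ≠ 0 := by positivity
      rw [Nat.add_sub_cancel]
      field_simp
      push_cast
      first
        | linear_combination h
        | linear_combination -h
        | linear_combination ((i' : ℝ) + 1) * h
  -- support claim
  have hsupp : ∀ i j : ℕ, ¬(i ≤ k ∧ j ≤ k) → ¬(i = k+1 ∧ j = 0) → ¬(i = 0 ∧ j = k+1) →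
      coeff (E i j) p = 0 := by
    intro i j hbox hs0 hs1
    rw [hp, coeff_add, cpi0, cpi1, hcS]
    have t1 : (if i = 0 then 0 else coeff (E (i-1) j) w₁ / (i:ℝ)) = 0 := by
      rcases Nat.eq_zero_or_pos i with rfl | hi
      · rw [if_pos rfl]
      · rw [if_neg (by omega)]
        rcases Nat.lt_or_ge (i-1) k with hik | hik
        · -- i - 1 < k : need j > k, so coeff (E (i-1) j) w₁ = 0
          rw [hz1 (i-1) j (by omega), zero_div]
        · rcases Nat.lt_or_ge k (i-1) with hik' | hik'
          · rw [hz1 (i-1) j (by omega), zero_div]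
          · -- i - 1 = k, j ≥ 1
            have hieq : i = k + 1 := by omega
            have hj : 1 ≤ j := by omega
            obtain ⟨j', rfl⟩ : ∃ j', j = j' + 1 := ⟨j - 1, by omega⟩
            have h := rel k j'
            rw [hz2 (k+1) j' (by omega), mul_zero] at h
            have hj1 : ((j' : ℝ) + 1) ≠ 0 := by positivity
            have : coeff (E k (j'+1)) w₁ = 0 := by
              rcases mul_eq_zero.mp h.symm with h' | h'
              · exact absurd h' hj1
              · exact h'
            rw [show i - 1 = k by omega, this, zero_div]
    have t2 : (if j = 0 then 0 else (if i = 0 then coeff (E i (j-1)) w₂ else 0) / (j:ℝ)) = 0 := by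
      rcases Nat.eq_zero_or_pos j with rfl | hj
      · rw [if_pos rfl]
      · rw [if_neg (by omega)]
        rcases Nat.eq_zero_or_pos i with rfl | hi
        · rw [if_pos rfl]
          rw [hz2 0 (j-1) (by omega), zero_div]
        · rw [if_neg (by omega), zero_div]
    rw [t1, t2, add_zero]
  clear_value p
  refine ⟨p, ⟨sift (fun d => d 0 ≤ k ∧ d 1 ≤ k) p, coeff (E (k+1) 0) p, coeff (E 0 (k+1)) p,
    ?_, ?_⟩, ?_⟩
  · rw [memQ2_iff']
    intro i j hij
    rw [coeff_sift, E_apply0, E_apply1] at hij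
    by_cases h : i ≤ k ∧ j ≤ k
    · exact h
    · rw [if_neg h] at hij; exact absurd rfl hij
  · apply ext_E
    intro i j
    simp only [coeff_add, coeff_smul, coeff_sift, coeff_Xpow0, coeff_Xpow1,
      E_apply0, E_apply1, smul_eq_mul, mul_ite, mul_one, mul_zero]
    by_cases h : i ≤ k ∧ j ≤ k
    · rw [if_pos h, if_neg (by omega), if_neg (by omega), add_zero, add_zero]
    · rw [if_neg h]
      by_cases h1 : i = k + 1 ∧ j = 0
      · obtain ⟨rfl, rfl⟩ := h1
        rw [if_pos ⟨rfl, rfl⟩, if_neg (by omega)]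
        ring
      · rw [if_neg h1]
        by_cases h2 : i = 0 ∧ j = k + 1
        · obtain ⟨rfl, rfl⟩ := h2
          rw [if_pos ⟨rfl, rfl⟩]
          ring
        · rw [if_neg h2, hsupp i j h h1 h2]
          ring
  · rw [grad2, hgrad0, hgrad1]

lemma part2l (k : ℕ) (p : R2) (hp : memH3 k p) : memE3 k (grad2 p) := by
  obtain ⟨h0, h1⟩ := grad_memQ2 k p hp
  exact ⟨pderiv 0 p, pderiv 1 p, 0, h0, h1, by simp [grad2]⟩


/-- The sequence
`(𝒬_k ⊕ span{x^{k+1},y^{k+1}}) →∇→ (𝐐_k ⊕ span{(x^k y^{k+1}, −x^{k+1} y^k)}) →∇×→ 𝒬_k`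
on `ℝ²` is exact: (i) the kernel of `∇` consists exactly of the constants;
(ii) the gradient image equals the curl-free fields; (iii) `∇×` is onto `𝒬_k`. -/
theorem stmt_3 (k : ℕ) :
    (∀ p : R2, memH3 k p → (grad2 p = 0 ↔ ∃ c : ℝ, p = C c)) ∧
    ({v : R2 × R2 | ∃ p : R2, memH3 k p ∧ v = grad2 p} =
      {v : R2 × R2 | memE3 k v ∧ curl2 v = 0}) ∧
    (∀ w : R2, memQ2 k w → ∃ v : R2 × R2, memE3 k v ∧ curl2 v = w) := by
  refine ⟨fun p _ => ⟨part1 p, ?_⟩, ?_, part3 k⟩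
  · rintro ⟨c, rfl⟩
    rw [grad2]
    simp [pderiv_C]
  · ext v
    simp only [Set.mem_setOf_eq]
    constructor
    · rintro ⟨p, hp, rfl⟩
      exact ⟨part2l k p hp, curl_grad p⟩
    · rintro ⟨hv, hcurl⟩
      obtain ⟨p, hp, hv'⟩ := part2r k v hv hcurl
      exact ⟨p, hp, hv'⟩
end

section
/- Let k ≥ 0. The Raviart–Thomas-type sequence 𝒬_{k+1} →∇→ E →∇×→ 𝒬_k on ℝ², where E := {(v₁, v₂) : v₁ ∈ 𝒬_k + y^{k+1}·𝒫_k(x), v₂ ∈ 𝒬_k + x^{k+1}·𝒫_k(y)}, is exact: (i) the kernel of ∇ on 𝒬_{k+1} consists exactly of the constants; (ii) ∇𝒬_{k+1} = {v ∈ E : ∇×v = 0}; (iii) ∇× maps E onto 𝒬_k. -/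
open MvPolynomial

/-- Membership in the Raviart–Thomas-type space
`E = {(v₁,v₂) : v₁ ∈ 𝒬_k + y^{k+1}·𝒫_k(x), v₂ ∈ 𝒬_k + x^{k+1}·𝒫_k(y)}`. -/
def memRT2 (k : ℕ) (v : R2 × R2) : Prop :=
  (∃ q f : R2, memQ2 k q ∧ f.degreeOf 0 ≤ k ∧ f.degreeOf 1 = 0 ∧
      v.1 = q + X 1 ^ (k + 1) * f) ∧
  (∃ q f : R2, memQ2 k q ∧ f.degreeOf 1 ≤ k ∧ f.degreeOf 0 = 0 ∧
      v.2 = q + X 0 ^ (k + 1) * f)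

/-! ### Auxiliary lemmas -/

lemma rt_single_sub_add {s : Fin 2 →₀ ℕ} {i : Fin 2} {n : ℕ} (h : n ≤ s i) :
    s - Finsupp.single i n + Finsupp.single i n = s := by
  ext j
  rcases eq_or_ne j i with rfl | hj
  · simp only [Finsupp.add_apply, Finsupp.tsub_apply, Finsupp.single_eq_same]
    omega
  · simp [Finsupp.add_apply, Finsupp.tsub_apply, Finsupp.single_eq_of_ne' (Ne.symm hj)]

lemma rt_coeff_pderiv (i : Fin 2) (m : Fin 2 →₀ ℕ) (p : R2) :
    coeff m (pderiv i p) = (m i + 1 : ℝ) * coeff (m + Finsupp.single i 1 : Fin 2 →₀ ℕ) p := by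
  induction p using MvPolynomial.induction_on' with
  | add p q hp hq => simp [hp, hq, mul_add]
  | monomial s a =>
    rw [pderiv_monomial]
    by_cases hs : s i = 0
    · have h2 : coeff (m + Finsupp.single i 1) (monomial s a) = 0 := by
        rw [coeff_monomial, if_neg]
        intro h; apply absurd hs; rw [h]; simp
      simp [hs, h2]
    · have hss : s - Finsupp.single i 1 + Finsupp.single i 1 = s :=
        rt_single_sub_add (by omega)
      rw [coeff_monomial, coeff_monomial]
      by_cases hm : s - Finsupp.single i 1 = m
      · have hsm : s = m + Finsupp.single i 1 := by rw [← hm, hss]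
        have hsi : s i = m i + 1 := by rw [hsm]; simp
        rw [if_pos hm, if_pos hsm, hsi]
        push_cast; ring
      · rw [if_neg hm, if_neg, mul_zero]
        intro hc
        exact hm (by rw [hc]; exact add_tsub_cancel_right _ _)

lemma rt_mem_support_pderiv {i : Fin 2} {m : Fin 2 →₀ ℕ} {p : R2}
    (h : m ∈ (pderiv i p).support) : m + Finsupp.single i 1 ∈ p.support := by
  rw [mem_support_iff] at h ⊢
  intro hc; apply h; rw [rt_coeff_pderiv, hc, mul_zero]

lemma rt_degreeOf_pderiv_le (i j : Fin 2) (p : R2) :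
    degreeOf j (pderiv i p) ≤ degreeOf j p := by
  rw [degreeOf_le_iff]
  intro m hm
  have h1 := monomial_le_degreeOf j (rt_mem_support_pderiv hm)
  have h2 : m j ≤ (m + Finsupp.single i 1 : Fin 2 →₀ ℕ) j := by
    simp only [Finsupp.add_apply]; omega
  omega

lemma rt_degreeOf_pderiv_self {i : Fin 2} {p : R2} {n : ℕ} (h : degreeOf i p ≤ n + 1) :
    degreeOf i (pderiv i p) ≤ n := by
  rw [degreeOf_le_iff]
  intro m hm
  have h1 := monomial_le_degreeOf i (rt_mem_support_pderiv hm)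
  have h2 : (m + Finsupp.single i 1 : Fin 2 →₀ ℕ) i = m i + 1 := by simp
  omega

lemma rt_pderiv_eq_zero_of_degreeOf {i : Fin 2} {p : R2} (h : degreeOf i p = 0) :
    pderiv i p = 0 := by
  ext m
  rw [rt_coeff_pderiv, coeff_zero]
  have hns : m + Finsupp.single i 1 ∉ p.support := by
    intro hc
    have h1 := monomial_le_degreeOf i hc
    have h2 : (m + Finsupp.single i 1 : Fin 2 →₀ ℕ) i = m i + 1 := by simp
    omega
  rw [notMem_support_iff] at hns
  rw [hns, mul_zero]

lemma rt_degreeOf_eq_zero_of_pderiv {i : Fin 2} {p : R2} (h : pderiv i p = 0) :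
    degreeOf i p = 0 := by
  rw [← Nat.le_zero, degreeOf_le_iff]
  intro m hm
  by_contra hc
  have hmi : 1 ≤ m i := by omega
  have hz : coeff (m - Finsupp.single i 1) (pderiv i p) = 0 := by rw [h]; simp
  rw [rt_coeff_pderiv, rt_single_sub_add hmi] at hz
  have hne : ((m - Finsupp.single i 1 : Fin 2 →₀ ℕ) i + 1 : ℝ) ≠ 0 := by positivity
  exact (mem_support_iff.mp hm) ((mul_eq_zero.mp hz).resolve_left hne)

lemma rt_pderiv_comm (p : R2) : pderiv 0 (pderiv 1 p) = pderiv 1 (pderiv 0 p) := by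
  ext m
  rw [rt_coeff_pderiv, rt_coeff_pderiv, rt_coeff_pderiv, rt_coeff_pderiv]
  have h01 : (m + Finsupp.single 1 1 : Fin 2 →₀ ℕ) 0 = m 0 := by
    simp [Finsupp.add_apply, Finsupp.single_apply]
  have h10 : (m + Finsupp.single 0 1 : Fin 2 →₀ ℕ) 1 = m 1 := by
    simp [Finsupp.add_apply, Finsupp.single_apply]
  rw [h01, h10, add_right_comm]
  ring

lemma rt_degreeOf_monomial_le (s : Fin 2 →₀ ℕ) (j : Fin 2) (a : ℝ) :
    degreeOf j (monomial s a) ≤ s j := by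
  by_cases ha : a = 0
  · simp [ha]
  · rw [degreeOf_monomial_eq _ _ ha]

/-- Antiderivative with respect to variable `i`. -/
noncomputable def rt_anti (i : Fin 2) (p : R2) : R2 :=
  ∑ m ∈ p.support, monomial (m + Finsupp.single i 1) (coeff m p / (m i + 1))

lemma rt_pderiv_anti (i : Fin 2) (p : R2) : pderiv i (rt_anti i p) = p := by
  rw [rt_anti, map_sum]
  have key : ∀ m ∈ p.support,
      pderiv i (monomial (m + Finsupp.single i 1) (coeff m p / (m i + 1)))
        = monomial m (coeff m p) := by
    intro m _
    rw [pderiv_monomial, add_tsub_cancel_right]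
    congr 1
    have h2 : ((m + Finsupp.single i 1 : Fin 2 →₀ ℕ) i : ℕ) = m i + 1 := by simp
    rw [h2]
    have hne : ((m i : ℝ) + 1) ≠ 0 := by positivity
    push_cast
    field_simp
  rw [Finset.sum_congr rfl key, support_sum_monomial_coeff]

lemma rt_degreeOf_anti_le (i j : Fin 2) (p : R2) (n : ℕ)
    (h : degreeOf j p ≤ n) (hji : j ≠ i) : degreeOf j (rt_anti i p) ≤ n := by
  refine (degreeOf_sum_le _ _ _).trans (Finset.sup_le fun m hm => ?_)
  refine (rt_degreeOf_monomial_le _ _ _).trans ?_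
  have h1 : (m + Finsupp.single i 1 : Fin 2 →₀ ℕ) j = m j := by
    simp [Finsupp.add_apply, Finsupp.single_apply, (Ne.symm hji)]
  rw [h1]
  exact (monomial_le_degreeOf j hm).trans h
  
lemma rt_degreeOf_anti_self (i : Fin 2) (p : R2) (n : ℕ)
    (h : degreeOf i p ≤ n) : degreeOf i (rt_anti i p) ≤ n + 1 := by
  refine (degreeOf_sum_le _ _ _).trans (Finset.sup_le fun m hm => ?_)
  refine (rt_degreeOf_monomial_le _ _ _).trans ?_
  have h1 : (m + Finsupp.single i 1 : Fin 2 →₀ ℕ) i = m i + 1 := by simp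
  have h2 := (monomial_le_degreeOf i hm).trans h
  omega

/-- The part of `p` with `i`-degree at most `k`. -/
noncomputable def rt_low (i : Fin 2) (k : ℕ) (p : R2) : R2 :=
  ∑ m ∈ p.support.filter (fun m => m i ≤ k), monomial m (coeff m p)

/-- The coefficient of `X i ^ (k+1)` of the remaining part. -/
noncomputable def rt_top (i : Fin 2) (k : ℕ) (p : R2) : R2 :=
  ∑ m ∈ p.support.filter (fun m => ¬ m i ≤ k),
    monomial (m - Finsupp.single i (k + 1)) (coeff m p)

lemma rt_split (i : Fin 2) (k : ℕ) (p : R2) (h : degreeOf i p ≤ k + 1) :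
    p = rt_low i k p + X i ^ (k + 1) * rt_top i k p := by
  rw [rt_low, rt_top, X_pow_eq_monomial, Finset.mul_sum]
  have key : ∀ m ∈ p.support.filter (fun m => ¬ m i ≤ k),
      monomial (Finsupp.single i (k+1)) (1:ℝ) * monomial (m - Finsupp.single i (k + 1)) (coeff m p)
        = monomial m (coeff m p) := by
    intro m hm
    rw [Finset.mem_filter] at hm
    have hle := monomial_le_degreeOf i hm.1
    have he : Finsupp.single i (k+1) + (m - Finsupp.single i (k+1)) = m := by
      rw [add_comm]
      exact rt_single_sub_add (by omega)
    rw [monomial_mul, one_mul, he]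
  rw [Finset.sum_congr rfl key, Finset.sum_filter_add_sum_filter_not]
  exact (support_sum_monomial_coeff p).symm

lemma rt_low_degreeOf (i j : Fin 2) (k : ℕ) (p : R2) (n : ℕ) (h : degreeOf j p ≤ n) :
    degreeOf j (rt_low i k p) ≤ n := by
  refine (degreeOf_sum_le _ _ _).trans (Finset.sup_le fun m hm => ?_)
  rw [Finset.mem_filter] at hm
  exact (rt_degreeOf_monomial_le _ _ _).trans ((monomial_le_degreeOf j hm.1).trans h)

lemma rt_low_degreeOf_self (i : Fin 2) (k : ℕ) (p : R2) :
    degreeOf i (rt_low i k p) ≤ k := by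
  refine (degreeOf_sum_le _ _ _).trans (Finset.sup_le fun m hm => ?_)
  rw [Finset.mem_filter] at hm
  exact (rt_degreeOf_monomial_le _ _ _).trans hm.2

lemma rt_top_degreeOf (i j : Fin 2) (k : ℕ) (p : R2) (n : ℕ) (h : degreeOf j p ≤ n) :
    degreeOf j (rt_top i k p) ≤ n := by
  refine (degreeOf_sum_le _ _ _).trans (Finset.sup_le fun m hm => ?_)
  rw [Finset.mem_filter] at hm
  refine (rt_degreeOf_monomial_le _ _ _).trans ?_
  have h1 : (m - Finsupp.single i (k+1) : Fin 2 →₀ ℕ) j ≤ m j := by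
    simp only [Finsupp.tsub_apply]; omega
  exact h1.trans ((monomial_le_degreeOf j hm.1).trans h)

lemma rt_top_degreeOf_self (i : Fin 2) (k : ℕ) (p : R2) (h : degreeOf i p ≤ k + 1) :
    degreeOf i (rt_top i k p) = 0 := by
  rw [← Nat.le_zero]
  refine (degreeOf_sum_le _ _ _).trans (Finset.sup_le fun m hm => ?_)
  rw [Finset.mem_filter] at hm
  refine (rt_degreeOf_monomial_le _ _ _).trans ?_
  have hle := (monomial_le_degreeOf i hm.1).trans h
  simp only [Finsupp.tsub_apply, Finsupp.single_eq_same]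
  omega

lemma rt_eq_C {p : R2} (h0 : degreeOf 0 p = 0) (h1 : degreeOf 1 p = 0) :
    p = C (coeff 0 p) := by
  ext m
  rw [coeff_C]
  split_ifs with h
  · rw [← h]
  · by_contra hc
    have hm : m ∈ p.support := mem_support_iff.mpr hc
    have e0 := monomial_le_degreeOf 0 hm
    have e1 := monomial_le_degreeOf 1 hm
    apply h
    symm
    ext j
    fin_cases j <;> simp <;> omega

lemma rt_degreeOf_X_pow (i j : Fin 2) (n : ℕ) (h : i ≠ j) :
    degreeOf i ((X j : R2) ^ n) = 0 := by
  rw [X_pow_eq_monomial, ← Nat.le_zero]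
  refine (rt_degreeOf_monomial_le _ _ _).trans ?_
  simp [Finsupp.single_apply, h.symm]

lemma rt_degreeOf_X_pow_self (i : Fin 2) (n : ℕ) :
    degreeOf i ((X i : R2) ^ n) ≤ n := by
  rw [X_pow_eq_monomial]
  refine (rt_degreeOf_monomial_le _ _ _).trans ?_
  simp

/-- The Raviart–Thomas-type sequence `𝒬_{k+1} →∇→ E →∇×→ 𝒬_k` on `ℝ²` is exact:
(i) the kernel of `∇` on `𝒬_{k+1}` consists exactly of the constants;
(ii) `∇𝒬_{k+1} = {v ∈ E : ∇×v = 0}`; (iii) `∇×` maps `E` onto `𝒬_k`. -/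
theorem stmt_4 (k : ℕ) :
    (∀ p : R2, memQ2 (k + 1) p → (grad2 p = 0 ↔ ∃ c : ℝ, p = C c)) ∧
    ({v : R2 × R2 | ∃ p : R2, memQ2 (k + 1) p ∧ v = grad2 p} =
      {v : R2 × R2 | memRT2 k v ∧ curl2 v = 0}) ∧
    (∀ w : R2, memQ2 k w → ∃ v : R2 × R2, memRT2 k v ∧ curl2 v = w) := by
  refine ⟨?_, ?_, ?_⟩
  · -- part (i)
    intro p _
    constructor
    · intro h
      have h0 : pderiv 0 p = 0 := congrArg Prod.fst h
      have h1 : pderiv 1 p = 0 := congrArg Prod.snd h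
      exact ⟨coeff 0 p, rt_eq_C (rt_degreeOf_eq_zero_of_pderiv h0)
        (rt_degreeOf_eq_zero_of_pderiv h1)⟩
    · rintro ⟨c, rfl⟩
      simp [grad2, pderiv_C, Prod.ext_iff]
  · -- part (ii)
    ext v
    simp only [Set.mem_setOf_eq]
    constructor
    · rintro ⟨p, ⟨hp0, hp1⟩, rfl⟩
      refine ⟨⟨⟨rt_low 1 k (pderiv 0 p), rt_top 1 k (pderiv 0 p), ?_, ?_, ?_, ?_⟩,
        ⟨rt_low 0 k (pderiv 1 p), rt_top 0 k (pderiv 1 p), ?_, ?_, ?_, ?_⟩⟩, ?_⟩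
      · exact ⟨rt_low_degreeOf 1 0 k _ k (rt_degreeOf_pderiv_self hp0),
          rt_low_degreeOf_self 1 k _⟩
      · exact rt_top_degreeOf 1 0 k _ k (rt_degreeOf_pderiv_self hp0)
      · exact rt_top_degreeOf_self 1 k _ ((rt_degreeOf_pderiv_le 0 1 p).trans hp1)
      · exact rt_split 1 k _ ((rt_degreeOf_pderiv_le 0 1 p).trans hp1)
      · exact ⟨rt_low_degreeOf_self 0 k _,
          rt_low_degreeOf 0 1 k _ k (rt_degreeOf_pderiv_self hp1)⟩
      · exact rt_top_degreeOf 0 1 k _ k (rt_degreeOf_pderiv_self hp1)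
      · exact rt_top_degreeOf_self 0 k _ ((rt_degreeOf_pderiv_le 1 0 p).trans hp0)
      · exact rt_split 0 k _ ((rt_degreeOf_pderiv_le 1 0 p).trans hp0)
      · show - pderiv 1 (pderiv 0 p) + pderiv 0 (pderiv 1 p) = 0
        rw [rt_pderiv_comm]
        ring
    · rintro ⟨⟨⟨q1, f1, hq1, hf10, hf11, hv1⟩, ⟨q2, f2, hq2, hf21, hf20, hv2⟩⟩, hcurl⟩
      -- degree bounds on v
      have hd0v1 : degreeOf 0 v.1 ≤ k := by
        rw [hv1]
        refine (degreeOf_add_le _ _ _).trans (max_le hq1.1 ?_)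
        refine (degreeOf_mul_le _ _ _).trans ?_
        rw [rt_degreeOf_X_pow 0 1 (k+1) (by decide)]
        simpa using hf10
      have hd1v1 : degreeOf 1 v.1 ≤ k + 1 := by
        rw [hv1]
        refine (degreeOf_add_le _ _ _).trans (max_le (hq1.2.trans (by omega)) ?_)
        refine (degreeOf_mul_le _ _ _).trans ?_
        have := rt_degreeOf_X_pow_self 1 (k+1)
        omega
      have hd1v2 : degreeOf 1 v.2 ≤ k := by
        rw [hv2]
        refine (degreeOf_add_le _ _ _).trans (max_le hq2.2 ?_)
        refine (degreeOf_mul_le _ _ _).trans ?_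
        rw [rt_degreeOf_X_pow 1 0 (k+1) (by decide)]
        simpa using hf21
      -- construct the potential
      set A := rt_anti 0 v.1 with hA
      set g := v.2 - pderiv 1 A with hg
      have hcurl' : pderiv 0 v.2 = pderiv 1 v.1 := by
        have : - pderiv 1 v.1 + pderiv 0 v.2 = 0 := hcurl
        linear_combination this
      have hpA : pderiv 0 A = v.1 := rt_pderiv_anti 0 v.1
      have hg0 : pderiv 0 g = 0 := by
        rw [hg, map_sub, hcurl', rt_pderiv_comm, hpA, sub_self]
      have hdg0 : degreeOf 0 g = 0 := rt_degreeOf_eq_zero_of_pderiv hg0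
      have hdg1 : degreeOf 1 g ≤ k := by
        refine (degreeOf_sub_le _ _ _).trans (max_le hd1v2 ?_)
        exact rt_degreeOf_pderiv_self (rt_degreeOf_anti_le 0 1 v.1 (k+1) hd1v1 (by decide))
      refine ⟨A + rt_anti 1 g, ⟨?_, ?_⟩, ?_⟩
      · refine (degreeOf_add_le _ _ _).trans (max_le ?_ ?_)
        · exact rt_degreeOf_anti_self 0 v.1 k hd0v1
        · exact (rt_degreeOf_anti_le 1 0 g 0 (le_of_eq hdg0) (by decide)).trans (by omega)
      · refine (degreeOf_add_le _ _ _).trans (max_le ?_ ?_)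
        · exact rt_degreeOf_anti_le 0 1 v.1 (k+1) hd1v1 (by decide)
        · exact rt_degreeOf_anti_self 1 g k hdg1
      · have hz : pderiv 0 (rt_anti 1 g) = 0 :=
          rt_pderiv_eq_zero_of_degreeOf
            (Nat.le_zero.mp (rt_degreeOf_anti_le 1 0 g 0 (le_of_eq hdg0) (by decide)))
        have h1 : pderiv 1 (A + rt_anti 1 g) = v.2 := by
          rw [map_add, rt_pderiv_anti, hg]
          ring
        have h0 : pderiv 0 (A + rt_anti 1 g) = v.1 := by
          rw [map_add, hpA, hz, add_zero]
        rw [grad2, h0, h1]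
  · -- part (iii)
    intro w ⟨hw0, hw1⟩
    set A := rt_anti 0 w with hA
    have hdA0 : degreeOf 0 A ≤ k + 1 := rt_degreeOf_anti_self 0 w k hw0
    have hdA1 : degreeOf 1 A ≤ k := rt_degreeOf_anti_le 0 1 w k hw1 (by decide)
    refine ⟨(0, A), ⟨⟨0, 0, ⟨by simp, by simp⟩, by simp, by simp, by simp⟩,
      ⟨rt_low 0 k A, rt_top 0 k A, ⟨rt_low_degreeOf_self 0 k A, rt_low_degreeOf 0 1 k A k hdA1⟩,
        rt_top_degreeOf 0 1 k A k hdA1, rt_top_degreeOf_self 0 k A hdA0,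
        rt_split 0 k A hdA0⟩⟩, ?_⟩
    show - pderiv 1 0 + pderiv 0 A = w
    rw [map_zero, neg_zero, zero_add, hA, rt_pderiv_anti]
end
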